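/- Let K be an algebraically closed field of characteristic zero, let α ∈ K, and let A = A₀ + A₁ζ ∈ Mₙ(𝒟) with A₀, A₁ ∈ Mₙ(K), where A₀ is K-similar to the Jordan block J_{n,α}. Then the class of matrices similar over 𝒟 to A contains exactly one matrix of the form J_{n,α} + B₁ζ, where B₁ ∈ Mₙ(K) has all columns except possibly the first equal to zero (i.e. (B₁)ᵢⱼ = 0 for j ≠ 1). -/
import Mathlib


open Matrix

/-- The 𝒟-matrix `A₀ + A₁ζ` built from two matrices over `K`. -/
def dualMat {K : Type*} [Field K] {ι : Type*} (A₀ A₁ : Matrix ι ι K) :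
    Matrix ι ι (DualNumber K) :=
  A₀.map (TrivSqZeroExt.inl : K → DualNumber K) +
    A₁.map (TrivSqZeroExt.inr : K → DualNumber K)

/-- Similarity of matrices over the dual numbers. -/
def DSimilar {K : Type*} [Field K] {ι : Type*} [Fintype ι] [DecidableEq ι]
    (A B : Matrix ι ι (DualNumber K)) : Prop :=
  ∃ G : Matrix ι ι (DualNumber K), IsUnit G ∧ B = G * A * G⁻¹

/-- K-similarity of matrices over `K`. -/
def KSimilar {K : Type*} [Field K] {ι : Type*} [Fintype ι] [DecidableEq ι]
    (A B : Matrix ι ι K) : Prop :=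
  ∃ P : Matrix ι ι K, IsUnit P ∧ B = P * A * P⁻¹

namespace Stmt18Aux

open TrivSqZeroExt Finset

variable {K : Type*} [Field K] {n : ℕ}

lemma fst_dualMat (A₀ A₁ : Matrix (Fin n) (Fin n) K) (i j : Fin n) :
    ((dualMat A₀ A₁) i j).fst = A₀ i j := by
  simp [dualMat]

lemma snd_dualMat (A₀ A₁ : Matrix (Fin n) (Fin n) K) (i j : Fin n) :
    ((dualMat A₀ A₁) i j).snd = A₁ i j := by
  simp [dualMat]

lemma dualMat_eq_iff {A₀ A₁ B₀ B₁ : Matrix (Fin n) (Fin n) K} :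
    dualMat A₀ A₁ = dualMat B₀ B₁ ↔ A₀ = B₀ ∧ A₁ = B₁ := by
  constructor
  · intro h
    constructor <;> ext i j
    · have := congrArg (fun M => (M i j).fst) h
      simpa [fst_dualMat] using this
    · have := congrArg (fun M => (M i j).snd) h
      simpa [snd_dualMat] using this
  · rintro ⟨rfl, rfl⟩; rfl

lemma dualMat_mul (A₀ A₁ B₀ B₁ : Matrix (Fin n) (Fin n) K) :
    dualMat A₀ A₁ * dualMat B₀ B₁ = dualMat (A₀ * B₀) (A₀ * B₁ + A₁ * B₀) := by
  ext i j
  · simp [mul_apply, fst_sum, fst_mul, fst_dualMat, snd_dualMat]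
  · simp [mul_apply, snd_sum, snd_mul, fst_dualMat, snd_dualMat, op_smul_eq_mul,
      smul_eq_mul, Finset.sum_add_distrib]

lemma dualMat_one : (dualMat 1 0 : Matrix (Fin n) (Fin n) (DualNumber K)) = 1 := by
  ext i j
  · simp [fst_dualMat, Matrix.one_apply]
    split <;> simp
  · simp [snd_dualMat, Matrix.one_apply]
    split <;> simp

lemma dualMat_fst_snd (M : Matrix (Fin n) (Fin n) (DualNumber K)) :
    dualMat (M.map fst) (M.map snd) = M := by
  ext i j
  · simp [fst_dualMat]
  · simp [snd_dualMat]

/-- similarity from an explicit two-sided inverse -/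
lemma dsim_of {A B G H : Matrix (Fin n) (Fin n) (DualNumber K)}
    (h1 : G * H = 1) (h2 : H * G = 1) (hB : B = G * A * H) : DSimilar A B :=
  ⟨G, ⟨⟨G, H, h1, h2⟩, rfl⟩, by rw [Matrix.inv_eq_right_inv h1]; exact hB⟩

lemma dsim_trans {A B C : Matrix (Fin n) (Fin n) (DualNumber K)}
    (h1 : DSimilar A B) (h2 : DSimilar B C) : DSimilar A C := by
  obtain ⟨G, hG, rfl⟩ := h1
  obtain ⟨H, hH, rfl⟩ := h2
  refine ⟨H * G, hH.mul hG, ?_⟩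
  rw [Matrix.mul_inv_rev]
  simp only [Matrix.mul_assoc]

lemma dsim_symm {A B : Matrix (Fin n) (Fin n) (DualNumber K)}
    (h : DSimilar A B) : DSimilar B A := by
  obtain ⟨G, hG, rfl⟩ := h
  have hd := (Matrix.isUnit_iff_isUnit_det G).mp hG
  refine dsim_of (Matrix.nonsing_inv_mul _ hd) (Matrix.mul_nonsing_inv _ hd) ?_
  rw [Matrix.mul_assoc G⁻¹, Matrix.mul_assoc (G * A), Matrix.nonsing_inv_mul _ hd, mul_one,
    ← Matrix.mul_assoc, Matrix.nonsing_inv_mul _ hd, one_mul]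

lemma dsim_base (P : Matrix (Fin n) (Fin n) K) (hP : IsUnit P)
    (A₀ A₁ : Matrix (Fin n) (Fin n) K) :
    DSimilar (dualMat A₀ A₁) (dualMat (P * A₀ * P⁻¹) (P * A₁ * P⁻¹)) := by
  have hd := (Matrix.isUnit_iff_isUnit_det P).mp hP
  have h1 : dualMat P (0 : Matrix (Fin n) (Fin n) K) * dualMat P⁻¹ 0 = 1 := by
    rw [dualMat_mul, Matrix.mul_nonsing_inv _ hd]
    simp only [Matrix.mul_zero, Matrix.zero_mul, add_zero]
    exact dualMat_one
  have h2 : dualMat (P⁻¹ : Matrix (Fin n) (Fin n) K) 0 * dualMat P 0 = 1 := by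
    rw [dualMat_mul, Matrix.nonsing_inv_mul _ hd]
    simp only [Matrix.mul_zero, Matrix.zero_mul, add_zero]
    exact dualMat_one
  refine dsim_of h1 h2 ?_
  rw [dualMat_mul, dualMat_mul]
  simp only [Matrix.mul_zero, Matrix.zero_mul, add_zero, zero_add]

lemma dsim_inf (Jm X S : Matrix (Fin n) (Fin n) K) :
    DSimilar (dualMat Jm X) (dualMat Jm (X + (S * Jm - Jm * S))) := by
  have h1 : dualMat (1 : Matrix (Fin n) (Fin n) K) S * dualMat 1 (-S) = 1 := by
    rw [dualMat_mul]
    simp only [one_mul, mul_one, neg_add_cancel]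
    exact dualMat_one
  have h2 : dualMat (1 : Matrix (Fin n) (Fin n) K) (-S) * dualMat 1 S = 1 := by
    rw [dualMat_mul]
    simp only [one_mul, mul_one, add_neg_cancel, neg_add_cancel]
    exact dualMat_one
  refine dsim_of h1 h2 ?_
  rw [dualMat_mul, dualMat_mul]
  refine dualMat_eq_iff.mpr ⟨by simp, ?_⟩
  simp only [one_mul, mul_one, Matrix.mul_neg]
  abel

/-- the nilpotent Jordan block -/
def Nmat (K : Type*) [Field K] (n : ℕ) : Matrix (Fin n) (Fin n) K :=
  Matrix.of fun i j => if (j : ℕ) = (i : ℕ) + 1 then 1 else 0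

lemma sum_ite_coe {c : ℕ} (f : Fin n → K) :
    (∑ l : Fin n, if (l : ℕ) = c then f l else 0) = if h : c < n then f ⟨c, h⟩ else 0 := by
  by_cases h : c < n
  · rw [dif_pos h, Finset.sum_eq_single (⟨c, h⟩ : Fin n)]
    · simp
    · intro b _ hb; rw [if_neg]; simpa [Fin.ext_iff] using hb
    · simp
  · rw [dif_neg h, Finset.sum_eq_zero]
    intro l _
    rw [if_neg]
    intro hl
    exact h (hl ▸ l.isLt)

lemma Nmat_pow (k : ℕ) (i j : Fin n) :
    ((Nmat K n) ^ k) i j = if (j : ℕ) = (i : ℕ) + k then 1 else 0 := by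
  induction k generalizing j with
  | zero =>
    rw [pow_zero, Matrix.one_apply]
    have := i.isLt
    have := j.isLt
    by_cases h : i = j
    · subst h; simp
    · rw [if_neg h, if_neg]
      intro hc
      exact h (Fin.ext (by omega))
  | succ k ih =>
    rw [pow_succ, Matrix.mul_apply]
    simp only [ih, ite_mul, one_mul, zero_mul]
    rw [sum_ite_coe (fun l => Nmat K n l j)]
    by_cases h : (i : ℕ) + k < n
    · rw [dif_pos h]
      simp only [Nmat, Matrix.of_apply]
      rw [if_congr (by omega : ((j:ℕ) = (i:ℕ)+k+1) ↔ ((j:ℕ) = (i:ℕ)+(k+1))) rfl rfl]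
    · rw [dif_neg h, if_neg]
      have := j.isLt
      omega

lemma trace_pow_mul (C : Matrix (Fin n) (Fin n) K)
    (hC : ∀ i j : Fin n, (j : ℕ) ≠ 0 → C i j = 0)
    (i j : Fin n) (hj : (j : ℕ) = 0) :
    Matrix.trace ((Nmat K n) ^ (i : ℕ) * C) = C i j := by
  rw [Matrix.trace]
  simp only [Matrix.diag_apply, Matrix.mul_apply, Nmat_pow, ite_mul, one_mul, zero_mul]
  rw [Finset.sum_eq_single j]
  · rw [sum_ite_coe (fun l => C l j)]
    have hi := i.isLt
    rw [dif_pos (show (j : ℕ) + (i : ℕ) < n by omega)]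
    congr 1
    exact Fin.ext (by simp; omega)
  · intro a _ ha
    rw [sum_ite_coe (fun l => C l a)]
    split
    · exact hC _ _ (fun h0 => ha (Fin.ext (by omega)))
    · rfl
  · simp

lemma J_eq {α : K} {J : Matrix (Fin n) (Fin n) K}
    (hJ : ∀ i j : Fin n,
      J i j = if i = j then α else if (j : ℕ) = (i : ℕ) + 1 then 1 else 0) :
    J = α • (1 : Matrix (Fin n) (Fin n) K) + Nmat K n := by
  ext i j
  rw [hJ]
  by_cases h : i = j
  · subst h
    have hne : ¬((i : ℕ) = (i : ℕ) + 1) := by omega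
    simp [Nmat, Matrix.one_apply, hne]
  · simp only [Matrix.add_apply, Matrix.smul_apply, Matrix.one_apply_ne h, smul_eq_mul, mul_zero,
      Nmat, Matrix.of_apply, if_neg h, zero_add]

lemma sandwich {α : K} {J : Matrix (Fin n) (Fin n) K}
    (hJe : J = α • (1 : Matrix (Fin n) (Fin n) K) + Nmat K n)
    (S : Matrix (Fin n) (Fin n) K) :
    S * J - J * S = S * Nmat K n - Nmat K n * S := by
  rw [hJe]
  simp only [Matrix.mul_add, Matrix.add_mul, Matrix.mul_smul, Matrix.smul_mul, mul_one, one_mul]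
  abel

/-- truncation of a matrix to `ℕ`-indexed entries -/
def xfun (X : Matrix (Fin n) (Fin n) K) : ℕ → ℕ → K := fun i j =>
  if h : i < n ∧ j < n then X ⟨i, h.1⟩ ⟨j, h.2⟩ else 0

def Smat (X : Matrix (Fin n) (Fin n) K) : Matrix (Fin n) (Fin n) K :=
  Matrix.of fun i j => -∑ t ∈ Finset.range n, xfun X ((i : ℕ) + t) ((j : ℕ) + 1 + t)

lemma key_exist (X : Matrix (Fin n) (Fin n) K) (i j : Fin n) (hj : (j : ℕ) ≠ 0) :
    (X + (Smat X * Nmat K n - Nmat K n * Smat X)) i j = 0 := by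
  set f : ℕ → K := fun t => xfun X ((i : ℕ) + t) ((j : ℕ) + t) with hf
  have hSN : (Smat X * Nmat K n) i j = -∑ t ∈ Finset.range n, f t := by
    rw [Matrix.mul_apply]
    have h1 : ∀ l : Fin n, Smat X i l * Nmat K n l j
        = if (l : ℕ) = (j : ℕ) - 1 then Smat X i l else 0 := by
      intro l
      simp only [Nmat, Matrix.of_apply, mul_ite, mul_one, mul_zero]
      rw [if_congr (by omega : ((j:ℕ) = (l:ℕ)+1) ↔ ((l:ℕ) = (j:ℕ)-1)) rfl rfl]
    rw [Finset.sum_congr rfl (fun l _ => h1 l), sum_ite_coe (fun l => Smat X i l)]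
    rw [dif_pos (show (j : ℕ) - 1 < n by have := j.isLt; omega)]
    simp only [Smat, Matrix.of_apply]
    congr 1
    refine Finset.sum_congr rfl fun t _ => ?_
    simp only [hf]
    have : ((⟨(j:ℕ)-1, by have := j.isLt; omega⟩ : Fin n) : ℕ) + 1 + t = (j : ℕ) + t := by
      simp; omega
    rw [this]
  have hNS : (Nmat K n * Smat X) i j = -∑ t ∈ Finset.range n, f (t + 1) := by
    rw [Matrix.mul_apply]
    have h1 : ∀ l : Fin n, Nmat K n i l * Smat X l j
        = if (l : ℕ) = (i : ℕ) + 1 then Smat X l j else 0 := by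
      intro l
      simp only [Nmat, Matrix.of_apply, ite_mul, one_mul, zero_mul]
    rw [Finset.sum_congr rfl (fun l _ => h1 l), sum_ite_coe (fun l => Smat X l j)]
    by_cases h : (i : ℕ) + 1 < n
    · rw [dif_pos h]
      simp only [Smat, Matrix.of_apply]
      congr 1
      refine Finset.sum_congr rfl fun t _ => ?_
      simp only [hf]
      have e1 : ((⟨(i:ℕ)+1, h⟩ : Fin n) : ℕ) + t = (i : ℕ) + (t + 1) := by simp; omega
      have e2 : (j : ℕ) + 1 + t = (j : ℕ) + (t + 1) := by omega
      rw [e1, e2]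
    · rw [dif_neg h]
      symm
      rw [neg_eq_zero]
      refine Finset.sum_eq_zero fun t _ => ?_
      simp only [hf, xfun]
      rw [dif_neg (by omega : ¬((i:ℕ) + (t+1) < n ∧ (j:ℕ) + (t+1) < n))]
  rw [Matrix.add_apply, Matrix.sub_apply, hSN, hNS]
  have h0 : f 0 = X i j := by
    simp only [hf, xfun, add_zero]
    rw [dif_pos ⟨i.isLt, j.isLt⟩]
  have hn : f n = 0 := by
    simp only [hf, xfun]
    rw [dif_neg (by omega : ¬((i:ℕ) + n < n ∧ (j:ℕ) + n < n))]
  have htel : ∑ t ∈ Finset.range n, f t = ∑ t ∈ Finset.range n, f (t + 1) + f 0 := by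
    have e1 := Finset.sum_range_succ f n
    have e2 := Finset.sum_range_succ' f n
    rw [e1, hn, add_zero] at e2
    exact e2
  rw [htel, h0]
  ring

end Stmt18Aux

open Stmt18Aux TrivSqZeroExt in
/-- Theorem 4.1: if `A₀` is K-similar to the Jordan block `J_{n,α}`, then the
similarity class of `A₀ + A₁ζ` contains exactly one matrix `J_{n,α} + B₁ζ`
with all columns of `B₁` except the first equal to zero. -/
theorem stmt_18 {K : Type*} [Field K] [IsAlgClosed K] [CharZero K] {n : ℕ}
    (α : K) (J : Matrix (Fin n) (Fin n) K)
    (hJ : ∀ i j : Fin n,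
      J i j = if i = j then α else if (j : ℕ) = (i : ℕ) + 1 then 1 else 0)
    (A₀ A₁ : Matrix (Fin n) (Fin n) K) (hK : KSimilar A₀ J) :
    ∃! B₁ : Matrix (Fin n) (Fin n) K,
      (∀ i j : Fin n, (j : ℕ) ≠ 0 → B₁ i j = 0) ∧
      DSimilar (dualMat A₀ A₁) (dualMat J B₁) := by
  have hJe := J_eq hJ
  obtain ⟨P, hP, hJP⟩ := hK
  -- existence
  set X : Matrix (Fin n) (Fin n) K := P * A₁ * P⁻¹ with hX
  set S : Matrix (Fin n) (Fin n) K := Smat X with hS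
  set Y : Matrix (Fin n) (Fin n) K := X + (S * J - J * S) with hY
  set B : Matrix (Fin n) (Fin n) K :=
    Matrix.of (fun i j => if (j : ℕ) = 0 then Y i j else 0) with hB
  have hBcol : ∀ i j : Fin n, (j : ℕ) ≠ 0 → B i j = 0 := by
    intro i j hj
    simp only [hB, Matrix.of_apply, if_neg hj]
  have hYB : Y = B := by
    ext i j
    by_cases hj : (j : ℕ) = 0
    · simp only [hB, Matrix.of_apply, if_pos hj]
    · rw [hBcol i j hj]
      have := key_exist X i j hj
      rw [← sandwich hJe S] at this
      exact this
  have hsim : DSimilar (dualMat A₀ A₁) (dualMat J B) := by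
    have step1 : DSimilar (dualMat A₀ A₁) (dualMat J X) := by
      have := dsim_base P hP A₀ A₁
      rwa [← hJP] at this
    have step2 : DSimilar (dualMat J X) (dualMat J B) := by
      have := dsim_inf J X S
      rwa [← hY, hYB] at this
    exact dsim_trans step1 step2
  refine ⟨B, ⟨hBcol, hsim⟩, ?_⟩
  -- uniqueness
  rintro B' ⟨hB'col, hsim'⟩
  -- it suffices to show: any two normal forms similar to each other are equal
  suffices huniq : ∀ C₁ C₂ : Matrix (Fin n) (Fin n) K,
      (∀ i j : Fin n, (j : ℕ) ≠ 0 → C₁ i j = 0) →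
      (∀ i j : Fin n, (j : ℕ) ≠ 0 → C₂ i j = 0) →
      DSimilar (dualMat J C₁) (dualMat J C₂) → C₁ = C₂ by
    exact huniq B' B hB'col hBcol (dsim_trans (dsim_symm hsim') hsim)
  intro C₁ C₂ hC₁ hC₂ hsim12
  obtain ⟨G, hG, hE⟩ := hsim12
  have hGdet := (Matrix.isUnit_iff_isUnit_det G).mp hG
  have hE2 : dualMat J C₂ * G = G * dualMat J C₁ := by
    rw [hE, Matrix.mul_assoc (G * dualMat J C₁), Matrix.nonsing_inv_mul _ hGdet, mul_one]
  set G₀ : Matrix (Fin n) (Fin n) K := G.map fst with hG₀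
  set G₁ : Matrix (Fin n) (Fin n) K := G.map snd with hG₁
  rw [← dualMat_fst_snd G, ← hG₀, ← hG₁, dualMat_mul, dualMat_mul, dualMat_eq_iff] at hE2
  obtain ⟨h0, h1⟩ := hE2
  -- h0 : J * G₀ = G₀ * J ; h1 : J * G₁ + C₂ * G₀ = G₀ * C₁ + G₁ * J
  have hG0unit : IsUnit G₀ := by
    have hfd : IsUnit ((TrivSqZeroExt.fstHom K K K).toRingHom G.det) := hGdet.map _
    rw [RingHom.map_det] at hfd
    refine (Matrix.isUnit_iff_isUnit_det _).mpr ?_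
    have : (TrivSqZeroExt.fstHom K K K).toRingHom.mapMatrix G = G₀ := by
      ext i j
      simp [RingHom.mapMatrix_apply, hG₀]
    rwa [this] at hfd
  have hN0 : Nmat K n * G₀ = G₀ * Nmat K n := by
    have h0' := h0
    rw [hJe] at h0'
    simp only [Matrix.add_mul, Matrix.mul_add, Matrix.smul_mul, Matrix.mul_smul,
      one_mul, mul_one] at h0'
    exact add_left_cancel h0'
  have cN : Commute (Nmat K n) G₀ := hN0
  have cJ : Commute J (Nmat K n) := by
    rw [hJe]
    exact Commute.add_left ((Commute.one_left (Nmat K n)).smul_left α) (Commute.refl _)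
  have htr : ∀ k : ℕ, Matrix.trace ((Nmat K n) ^ k * (G₀ * C₁))
      = Matrix.trace ((Nmat K n) ^ k * (G₀ * C₂)) := by
    intro k
    have h2 := congrArg (fun M => Matrix.trace ((Nmat K n) ^ k * M)) h1
    simp only [Matrix.mul_add, Matrix.trace_add] at h2
    have e1 : Matrix.trace ((Nmat K n) ^ k * (J * G₁))
        = Matrix.trace ((Nmat K n) ^ k * (G₁ * J)) := by
      calc Matrix.trace ((Nmat K n) ^ k * (J * G₁))
          = Matrix.trace (((Nmat K n) ^ k * J) * G₁) := by rw [Matrix.mul_assoc]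
        _ = Matrix.trace ((J * (Nmat K n) ^ k) * G₁) := by rw [(cJ.pow_right k).eq]
        _ = Matrix.trace (J * ((Nmat K n) ^ k * G₁)) := by rw [Matrix.mul_assoc]
        _ = Matrix.trace (((Nmat K n) ^ k * G₁) * J) := Matrix.trace_mul_comm _ _
        _ = Matrix.trace ((Nmat K n) ^ k * (G₁ * J)) := by rw [Matrix.mul_assoc]
    have e2 : Matrix.trace ((Nmat K n) ^ k * (C₂ * G₀))
        = Matrix.trace ((Nmat K n) ^ k * (G₀ * C₂)) := by
      calc Matrix.trace ((Nmat K n) ^ k * (C₂ * G₀))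
          = Matrix.trace (((Nmat K n) ^ k * C₂) * G₀) := by rw [Matrix.mul_assoc]
        _ = Matrix.trace (G₀ * ((Nmat K n) ^ k * C₂)) := (Matrix.trace_mul_comm _ _).symm
        _ = Matrix.trace ((G₀ * (Nmat K n) ^ k) * C₂) := by rw [Matrix.mul_assoc]
        _ = Matrix.trace (((Nmat K n) ^ k * G₀) * C₂) := by rw [(cN.pow_left k).eq]
        _ = Matrix.trace ((Nmat K n) ^ k * (G₀ * C₂)) := by rw [Matrix.mul_assoc]
    linear_combination e1 + e2 - h2
  have hc1 : ∀ i j : Fin n, (j : ℕ) ≠ 0 → (G₀ * C₁) i j = 0 := by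
    intro i j hj
    rw [Matrix.mul_apply]
    exact Finset.sum_eq_zero fun l _ => by rw [hC₁ l j hj, mul_zero]
  have hc2 : ∀ i j : Fin n, (j : ℕ) ≠ 0 → (G₀ * C₂) i j = 0 := by
    intro i j hj
    rw [Matrix.mul_apply]
    exact Finset.sum_eq_zero fun l _ => by rw [hC₂ l j hj, mul_zero]
  have hkey : G₀ * C₁ = G₀ * C₂ := by
    ext i j
    by_cases hj : (j : ℕ) = 0
    · rw [← trace_pow_mul _ hc1 i j hj, htr (i : ℕ), trace_pow_mul _ hc2 i j hj]
    · rw [hc1 i j hj, hc2 i j hj]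
  exact hG0unit.mul_left_cancel hkey
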